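/- Let (X, B, μ) be a probability space and S₁, ..., S_{k−1} : X → X commuting invertible measure preserving transformations, with k ≥ 2. Let p ∈ ℝ[x] have degree at least k and irrational leading coefficient. Then for all f₁, ..., f_{k−1} ∈ L^∞(X, μ) and every h ∈ ℕ, lim_{N→∞} (1/N)‖∑_{n=1}^N S₁ⁿf₁ · S₂ⁿf₂ ⋯ S_{k−1}ⁿf_{k−1} · e^{2πi p(n)}‖_{L²} = 0. -/

import Mathlib

/-!
The proof is an induction on the number `m` of transformations, driven by the van der Corput
lemma in a Hilbert space: a bounded sequence `u` has Cesàro averages tending to `0` as soon as,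
for every lag `d ≥ 1`, the averages of `⟪u (n + d), u n⟫` do. (Compare `∑ₙ uₙ` with the block
sums `H⁻¹ ∑ₙ ∑_{h<H} u_{n+h}`; by Cauchy–Schwarz their size is governed by the mean square of
`∑_{h<H} u_{n+h}`, in which the off-diagonal correlations average out, leaving `O(H)`.)

For `aₙ = S₁ⁿf₁ ⋯ S_mⁿf_m · e(p(n))` in `L²`, the correlation at lag `d` is the integral of
`S₁ⁿg₁ ⋯ S_mⁿg_m · e(p(n) - p(n + d))` with `gᵢ = conj (fᵢ ∘ Sᵢᵈ) · fᵢ`. Substituting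
`x ↦ S_mⁿ x` turns it into `∫ g_m · T₁ⁿg₁ ⋯ T_{m-1}ⁿg_{m-1} · e(p(n) - p(n + d))` with
`Tⱼ = Sⱼ ∘ S_m⁻¹`: a system with one transformation fewer, twisted by a polynomial of one degree
less whose leading coefficient is still irrational. By Cauchy–Schwarz the averaged correlations
are bounded by the `L²` norms of the averages of that system, which tend to `0` by induction.
With no transformation left this is Weyl's theorem `(1/N) ∑ₙ e(p(n)) → 0`, proved the same way
by induction on the degree.
-/

open MeasureTheory Filter Finset Polynomial
open scoped Real InnerProductSpace ComplexConjugate Topology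

section VanDerCorput

variable {F : Type*} [SeminormedAddCommGroup F] {u : ℕ → F} {C : ℝ}

theorem norm_sum_range_add_sub_sum_range_le (hu : ∀ n, ‖u n‖ ≤ C) (h N : ℕ) :
    ‖∑ n ∈ range N, u (n + h) - ∑ n ∈ range N, u n‖ ≤ 2 * h * C := by
  have hsplit : ∑ n ∈ range N, u (n + h) - ∑ n ∈ range N, u n
      = ∑ n ∈ range h, u (N + n) - ∑ n ∈ range h, u n := by
    have h₁ := sum_range_add u N h
    have h₂ := sum_range_add u h N
    simp only [Nat.add_comm h] at h₂
    rw [sub_eq_sub_iff_add_eq_add, add_comm, ← h₂, h₁, add_comm]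
  have hsum (v : ℕ → F) (hv : ∀ n, ‖v n‖ ≤ C) : ‖∑ n ∈ range h, v n‖ ≤ h * C := by
    simpa using norm_sum_le_of_le (range h) fun n _ => hv n
  rw [hsplit]
  linarith [norm_sub_le (∑ n ∈ range h, u (N + n)) (∑ n ∈ range h, u n),
    hsum _ fun n => hu (N + n), hsum u hu]

theorem norm_average_le_sqrt_average_norm_sq (u : ℕ → F) (N : ℕ) :
    (N : ℝ)⁻¹ * ‖∑ n ∈ range N, u n‖ ≤ √((N : ℝ)⁻¹ * ∑ n ∈ range N, ‖u n‖ ^ 2) := by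
  refine Real.le_sqrt_of_sq_le ?_
  calc ((N : ℝ)⁻¹ * ‖∑ n ∈ range N, u n‖) ^ 2
      ≤ (N : ℝ)⁻¹ ^ 2 * (∑ n ∈ range N, ‖u n‖) ^ 2 := by
        rw [mul_pow]; gcongr; exact norm_sum_le _ _
    _ ≤ (N : ℝ)⁻¹ ^ 2 * (N * ∑ n ∈ range N, ‖u n‖ ^ 2) := by
        gcongr; simpa using sq_sum_le_card_mul_sum_sq (s := range N) (f := fun n => ‖u n‖)
    _ = (N : ℝ)⁻¹ * ((N : ℝ)⁻¹ * N) * ∑ n ∈ range N, ‖u n‖ ^ 2 := by ring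
    _ ≤ (N : ℝ)⁻¹ * ∑ n ∈ range N, ‖u n‖ ^ 2 := by
        rcases N.eq_zero_or_pos with rfl | hN
        · simp
        · rw [inv_mul_cancel₀ (by positivity), mul_one]

variable [NormedSpace ℝ F]

theorem norm_average_le (hu : ∀ n, ‖u n‖ ≤ C) (hC : 0 ≤ C) (N : ℕ) :
    ‖(N : ℝ)⁻¹ • ∑ n ∈ range N, u n‖ ≤ C := by
  rcases N.eq_zero_or_pos with rfl | hN
  · simpa using hC
  rw [norm_smul, norm_inv, Real.norm_natCast, inv_mul_le_iff₀ (by exact_mod_cast hN)]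
  simpa using norm_sum_le_of_le (range N) fun n _ => hu n

theorem norm_sum_range_le_of_blocks (hu : ∀ n, ‖u n‖ ≤ C) {H : ℕ} (hH : 0 < H) (N : ℕ) :
    ‖∑ n ∈ range N, u n‖
      ≤ 2 * H * C + (H : ℝ)⁻¹ * ‖∑ n ∈ range N, ∑ h ∈ range H, u (n + h)‖ := by
  have hH' : (0 : ℝ) < H := by exact_mod_cast hH
  have hsplit : (H : ℝ) • ∑ n ∈ range N, u n = ∑ n ∈ range N, ∑ h ∈ range H, u (n + h)
      - ∑ h ∈ range H, (∑ n ∈ range N, u (n + h) - ∑ n ∈ range N, u n) := by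
    rw [sum_sub_distrib, sum_comm (s := range N), sum_const, card_range, Nat.cast_smul_eq_nsmul]
    abel
  have hdefect : ‖∑ h ∈ range H, (∑ n ∈ range N, u (n + h) - ∑ n ∈ range N, u n)‖
      ≤ H * (2 * H * C) := by
    have hC : 0 ≤ C := (norm_nonneg _).trans (hu 0)
    calc _ ≤ ∑ h ∈ range H, 2 * H * C := norm_sum_le_of_le _ fun h hh =>
          (norm_sum_range_add_sub_sum_range_le hu h N).trans
            (by gcongr; exact_mod_cast (mem_range.1 hh).le)
      _ = H * (2 * H * C) := by simp
  have := norm_sub_le (∑ n ∈ range N, ∑ h ∈ range H, u (n + h))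
    (∑ h ∈ range H, (∑ n ∈ range N, u (n + h) - ∑ n ∈ range N, u n))
  rw [← hsplit, norm_smul, Real.norm_natCast] at this
  rw [← mul_le_mul_iff_of_pos_left hH', mul_add, mul_inv_cancel_left₀ hH'.ne']
  linarith

theorem tendsto_average_add_of_tendsto_average (hu : ∀ n, ‖u n‖ ≤ C) (h : ℕ)
    (hlim : Tendsto (fun N : ℕ => (N : ℝ)⁻¹ • ∑ n ∈ range N, u n) atTop (𝓝 0)) :
    Tendsto (fun N : ℕ => (N : ℝ)⁻¹ • ∑ n ∈ range N, u (n + h)) atTop (𝓝 0) := by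
  have hdiff : Tendsto
      (fun N : ℕ => (N : ℝ)⁻¹ • (∑ n ∈ range N, u (n + h) - ∑ n ∈ range N, u n)) atTop (𝓝 0) := by
    refine squeeze_zero_norm (fun N => ?_) (tendsto_const_div_atTop_nhds_zero_nat (2 * h * C))
    rw [norm_smul, norm_inv, Real.norm_natCast, inv_mul_eq_div]
    gcongr
    exact norm_sum_range_add_sub_sum_range_le hu h N
  simpa [smul_sub] using hdiff.add hlim

variable {𝕜 E : Type*} [RCLike 𝕜] [NormedAddCommGroup E] [InnerProductSpace 𝕜 E] {u : ℕ → E}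

theorem norm_inner_le_sq (hu : ∀ n, ‖u n‖ ≤ C) (m n : ℕ) : ‖⟪u m, u n⟫_𝕜‖ ≤ C ^ 2 := by
  have hC : 0 ≤ C := (norm_nonneg _).trans (hu 0)
  rw [sq]
  exact (norm_inner_le_norm _ _).trans (mul_le_mul (hu m) (hu n) (norm_nonneg _) hC)

theorem tendsto_average_inner_add_add (hu : ∀ n, ‖u n‖ ≤ C)
    (hcor : ∀ d, 0 < d →
      Tendsto (fun N : ℕ => (N : ℝ)⁻¹ • ∑ n ∈ range N, ⟪u (n + d), u n⟫_𝕜) atTop (𝓝 0))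
    {h h' : ℕ} (hne : h ≠ h') :
    Tendsto (fun N : ℕ => (N : ℝ)⁻¹ • ∑ n ∈ range N, ⟪u (n + h), u (n + h')⟫_𝕜)
      atTop (𝓝 0) := by
  wlog hlt : h' < h generalizing h h'
  · have := (RCLike.continuous_conj.tendsto 0).comp (this hne.symm (by omega))
    simpa [Function.comp_def, map_sum, RCLike.real_smul_eq_coe_mul] using this
  obtain ⟨d, rfl⟩ := Nat.exists_eq_add_of_lt hlt
  have := tendsto_average_add_of_tendsto_average (u := fun n => ⟪u (n + (d + 1)), u n⟫_𝕜)
    (fun n => norm_inner_le_sq hu _ _) h' (hcor (d + 1) d.succ_pos)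
  simpa only [add_assoc, add_comm d 1, add_left_comm h'] using this

theorem average_norm_sq_sum_le (H N : ℕ) :
    (N : ℝ)⁻¹ * ∑ n ∈ range N, ‖∑ h ∈ range H, u (n + h)‖ ^ 2
      ≤ ∑ h ∈ range H, ∑ h' ∈ range H,
          ‖(N : ℝ)⁻¹ • ∑ n ∈ range N, ⟪u (n + h), u (n + h')⟫_𝕜‖ := by
  have hexpand (n : ℕ) : ‖∑ h ∈ range H, u (n + h)‖ ^ 2
      = RCLike.re (∑ h ∈ range H, ∑ h' ∈ range H, ⟪u (n + h), u (n + h')⟫_𝕜) := by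
    rw [@norm_sq_eq_re_inner 𝕜, sum_inner]
    simp only [inner_sum]
  have hswap : (N : ℝ)⁻¹ • ∑ n ∈ range N, ∑ h ∈ range H, ∑ h' ∈ range H, ⟪u (n + h), u (n + h')⟫_𝕜
      = ∑ h ∈ range H, ∑ h' ∈ range H, (N : ℝ)⁻¹ • ∑ n ∈ range N, ⟪u (n + h), u (n + h')⟫_𝕜 := by
    rw [sum_comm, smul_sum]
    refine sum_congr rfl fun h _ => ?_
    rw [sum_comm, smul_sum]
  calc (N : ℝ)⁻¹ * ∑ n ∈ range N, ‖∑ h ∈ range H, u (n + h)‖ ^ 2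
      = RCLike.re ((N : ℝ)⁻¹ • ∑ n ∈ range N, ∑ h ∈ range H, ∑ h' ∈ range H,
          ⟪u (n + h), u (n + h')⟫_𝕜) := by
        simp only [hexpand, RCLike.smul_re, map_sum]
    _ ≤ _ := by
        rw [hswap]
        exact (RCLike.re_le_norm _).trans
          ((norm_sum_le _ _).trans (sum_le_sum fun h _ => norm_sum_le _ _))

theorem eventually_average_norm_sq_sum_le (hu : ∀ n, ‖u n‖ ≤ C)
    (hcor : ∀ d, 0 < d →
      Tendsto (fun N : ℕ => (N : ℝ)⁻¹ • ∑ n ∈ range N, ⟪u (n + d), u n⟫_𝕜) atTop (𝓝 0))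
    (H : ℕ) :
    ∀ᶠ N : ℕ in atTop,
      (N : ℝ)⁻¹ * ∑ n ∈ range N, ‖∑ h ∈ range H, u (n + h)‖ ^ 2 ≤ H * C ^ 2 + 1 := by
  set c : ℕ → ℕ → ℕ → 𝕜 :=
    fun h h' (N : ℕ) => (N : ℝ)⁻¹ • ∑ n ∈ range N, ⟪u (n + h), u (n + h')⟫_𝕜
  have hoff : Tendsto (fun N => ∑ h ∈ range H, ∑ h' ∈ range H, if h = h' then 0 else ‖c h h' N‖)
      atTop (𝓝 0) := by
    have hterm (h h' : ℕ) :
        Tendsto (fun N => if h = h' then 0 else ‖c h h' N‖) atTop (𝓝 0) := by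
      split_ifs with hh
      · exact tendsto_const_nhds
      · simpa using (tendsto_average_inner_add_add hu hcor hh).norm
    simpa using tendsto_finsetSum (range H) fun h _ => tendsto_finsetSum (range H) fun h' _ =>
      hterm h h'
  have hdiag : ∑ h ∈ range H, ∑ h' ∈ range H, (if h = h' then C ^ 2 else 0) = H * C ^ 2 := by
    rw [sum_congr rfl fun h hh => by rw [sum_ite_eq, if_pos hh]]
    simp
  filter_upwards [hoff.eventually (ge_mem_nhds one_pos)] with N hN
  refine (average_norm_sq_sum_le (𝕜 := 𝕜) H N).trans ?_
  calc ∑ h ∈ range H, ∑ h' ∈ range H, ‖c h h' N‖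
      ≤ ∑ h ∈ range H, ∑ h' ∈ range H,
          ((if h = h' then C ^ 2 else 0) + if h = h' then 0 else ‖c h h' N‖) := by
        gcongr with h _ h' _
        split_ifs with hh
        · rw [hh, add_zero]
          exact norm_average_le (fun n => norm_inner_le_sq hu _ _) (sq_nonneg C) N
        · simp
    _ ≤ H * C ^ 2 + 1 := by
        simp only [sum_add_distrib, hdiag]
        linarith

variable [NormedSpace ℝ E]

theorem eventually_norm_average_le (hu : ∀ n, ‖u n‖ ≤ C)
    (hcor : ∀ d, 0 < d →
      Tendsto (fun N : ℕ => (N : ℝ)⁻¹ • ∑ n ∈ range N, ⟪u (n + d), u n⟫_𝕜) atTop (𝓝 0))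
    {H : ℕ} (hH : 0 < H) :
    ∀ᶠ N : ℕ in atTop,
      ‖(N : ℝ)⁻¹ • ∑ n ∈ range N, u n‖ ≤ 2 * H * C / N + √((C ^ 2 + 1) / H) := by
  have hH' : (0 : ℝ) < H := by exact_mod_cast hH
  have hH1 : (1 : ℝ) ≤ H := by exact_mod_cast hH
  filter_upwards [eventually_average_norm_sq_sum_le hu hcor H] with N hN
  set v := fun n => ∑ h ∈ range H, u (n + h)
  have hsqrt : (H : ℝ)⁻¹ * √(H * C ^ 2 + 1) ≤ √((C ^ 2 + 1) / H) := by
    rw [← Real.sqrt_sq (inv_nonneg.2 hH'.le), ← Real.sqrt_mul (by positivity)]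
    refine Real.sqrt_le_sqrt ?_
    rw [inv_pow, ← div_eq_inv_mul, div_le_div_iff₀ (by positivity) hH']
    nlinarith [sq_nonneg C]
  calc ‖(N : ℝ)⁻¹ • ∑ n ∈ range N, u n‖
      ≤ (N : ℝ)⁻¹ * (2 * H * C + (H : ℝ)⁻¹ * ‖∑ n ∈ range N, v n‖) := by
        rw [norm_smul, norm_inv, Real.norm_natCast]
        gcongr
        exact norm_sum_range_le_of_blocks hu hH N
    _ = 2 * H * C / N + (H : ℝ)⁻¹ * ((N : ℝ)⁻¹ * ‖∑ n ∈ range N, v n‖) := by ring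
    _ ≤ 2 * H * C / N + (H : ℝ)⁻¹ * √(H * C ^ 2 + 1) := by
        gcongr
        exact (norm_average_le_sqrt_average_norm_sq v N).trans (Real.sqrt_le_sqrt hN)
    _ ≤ 2 * H * C / N + √((C ^ 2 + 1) / H) := by gcongr

theorem tendsto_average_of_tendsto_average_inner (hu : ∀ n, ‖u n‖ ≤ C)
    (hcor : ∀ d, 0 < d →
      Tendsto (fun N : ℕ => (N : ℝ)⁻¹ • ∑ n ∈ range N, ⟪u (n + d), u n⟫_𝕜) atTop (𝓝 0)) :
    Tendsto (fun N : ℕ => (N : ℝ)⁻¹ • ∑ n ∈ range N, u n) atTop (𝓝 0) := by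
  rw [NormedAddGroup.tendsto_nhds_zero]
  intro ε hε
  obtain ⟨H, hH⟩ := exists_nat_gt ((C ^ 2 + 1) / (ε / 2) ^ 2)
  have hH0 : 0 < H := by
    have : (0 : ℝ) < H := lt_of_le_of_lt (by positivity) hH
    exact_mod_cast this
  have hsqrt : √((C ^ 2 + 1) / H) < ε / 2 := by
    rw [Real.sqrt_lt' (by positivity), div_lt_iff₀ (by exact_mod_cast hH0)]
    rwa [div_lt_iff₀' (by positivity)] at hH
  have hsmall : ∀ᶠ N : ℕ in atTop, 2 * H * C / N < ε / 2 :=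
    (tendsto_const_div_atTop_nhds_zero_nat _).eventually (gt_mem_nhds (by positivity))
  filter_upwards [eventually_norm_average_le hu hcor hH0, hsmall] with N hN hN'
  linarith

end VanDerCorput

namespace Polynomial

variable {R : Type*}

theorem coeff_taylor_of_natDegree_eq_succ [CommSemiring R] {q : R[X]} {e : ℕ}
    (he : q.natDegree = e + 1) (c : R) :
    (taylor c q).coeff e = q.coeff e + (e + 1) * c * q.coeff (e + 1) := by
  have hdeg : (hasseDeriv e q).natDegree < 2 := by
    have := natDegree_hasseDeriv_le q e
    omega
  rw [taylor_coeff, eval_eq_sum_range' hdeg, sum_range_succ, sum_range_one]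
  simp only [hasseDeriv_coeff, zero_add, Nat.choose_self, pow_zero, pow_one, add_comm 1 e,
    Nat.choose_succ_self_right]
  push_cast
  ring

variable [CommRing R] {q : R[X]} {c : R} {e : ℕ}

theorem coeff_sub_taylor_of_natDegree_eq_succ (he : q.natDegree = e + 1) :
    (q - taylor c q).coeff e = -((e + 1) * c * q.leadingCoeff) := by
  rw [coeff_sub, coeff_taylor_of_natDegree_eq_succ he, leadingCoeff, he]
  ring

variable [IsDomain R] [CharZero R]

theorem natDegree_sub_taylor (hc : c ≠ 0) (he : q.natDegree = e + 1) :
    (q - taylor c q).natDegree = e := by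
  have hq : q.leadingCoeff ≠ 0 := leadingCoeff_ne_zero.2 (by rintro rfl; simp at he)
  refine natDegree_eq_of_le_of_coeff_ne_zero ?_ ?_
  · have hle : (q - taylor c q).natDegree ≤ e + 1 :=
      (natDegree_sub_le _ _).trans (by rw [natDegree_taylor, max_self, he])
    have htop : (q - taylor c q).coeff (e + 1) = 0 := by
      have := leadingCoeff_taylor (r := c) (f := q)
      rw [leadingCoeff, natDegree_taylor] at this
      rw [coeff_sub, ← he, this, leadingCoeff, sub_self]
    simpa using natDegree_le_pred hle htop
  · rw [coeff_sub_taylor_of_natDegree_eq_succ he, neg_ne_zero]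
    exact mul_ne_zero (mul_ne_zero (by exact_mod_cast e.succ_ne_zero) hc) hq

theorem leadingCoeff_sub_taylor (hc : c ≠ 0) (he : q.natDegree = e + 1) :
    (q - taylor c q).leadingCoeff = -((e + 1) * c * q.leadingCoeff) := by
  rw [leadingCoeff, natDegree_sub_taylor hc he, coeff_sub_taylor_of_natDegree_eq_succ he]

end Polynomial

theorem irrational_leadingCoeff_sub_taylor {q : ℝ[X]} {e : ℕ} (he : q.natDegree = e + 1)
    (hirr : Irrational q.leadingCoeff) {d : ℕ} (hd : 0 < d) :
    Irrational (q - taylor (d : ℝ) q).leadingCoeff := by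
  rw [leadingCoeff_sub_taylor (by positivity) he]
  have := (irrational_natCast_mul_iff.2 ⟨(Nat.mul_pos e.succ_pos hd).ne', hirr⟩).neg
  push_cast at this
  exact this

namespace Complex

theorem norm_exp_two_pi_I_mul (r : ℝ) : ‖exp (2 * π * I * r)‖ = 1 := by
  rw [show 2 * π * I * r = ((2 * π * r : ℝ) : ℂ) * I by push_cast; ring]
  exact norm_exp_ofReal_mul_I _

theorem conj_exp_two_pi_I_mul_mul (a b : ℝ) :
    conj (exp (2 * π * I * a)) * exp (2 * π * I * b) = exp (2 * π * I * (b - a : ℝ)) := by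
  rw [← exp_conj, ← exp_add]
  simp only [map_mul, conj_ofReal, conj_I, map_ofNat]
  push_cast
  ring_nf

theorem exp_two_pi_I_mul_ne_one {a : ℝ} (ha : Irrational a) : exp (2 * π * I * a) ≠ 1 := by
  rw [Ne, exp_eq_one_iff]
  rintro ⟨n, hn⟩
  apply ha.ne_int n
  have : (a : ℂ) = n := by
    apply mul_left_cancel₀ (by simp [Real.pi_ne_zero, I_ne_zero] : 2 * π * I ≠ 0)
    rw [hn]; ring
  exact_mod_cast this

theorem norm_sum_range_pow_le {z : ℂ} (hz : ‖z‖ = 1) (hz1 : z ≠ 1) (N : ℕ) :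
    ‖∑ n ∈ range N, z ^ n‖ ≤ 2 / ‖z - 1‖ := by
  rw [geom_sum_eq hz1, norm_div]
  gcongr
  calc ‖z ^ N - 1‖ ≤ ‖z ^ N‖ + ‖(1 : ℂ)‖ := norm_sub_le _ _
    _ = 2 := by rw [norm_pow, hz, one_pow, norm_one]; norm_num

theorem tendsto_average_pow {z : ℂ} (hz : ‖z‖ = 1) (hz1 : z ≠ 1) :
    Tendsto (fun N : ℕ => (N : ℝ)⁻¹ • ∑ n ∈ range N, z ^ n) atTop (𝓝 0) := by
  refine squeeze_zero_norm (fun N => ?_) (tendsto_const_div_atTop_nhds_zero_nat (2 / ‖z - 1‖))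
  rw [norm_smul, norm_inv, Real.norm_natCast, inv_mul_eq_div]
  gcongr
  exact norm_sum_range_pow_le hz hz1 N

end Complex

open Complex in
theorem tendsto_average_exp_two_pi_I_mul_eval {q : ℝ[X]} (hq : 0 < q.natDegree)
    (hirr : Irrational q.leadingCoeff) :
    Tendsto (fun N : ℕ => (N : ℝ)⁻¹ • ∑ n ∈ range N, exp (2 * π * I * q.eval (n : ℝ)))
      atTop (𝓝 0) := by
  obtain ⟨e, he⟩ : ∃ e, q.natDegree = e + 1 := ⟨_, (Nat.succ_pred_eq_of_pos hq).symm⟩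
  clear hq
  induction e generalizing q with
  | zero =>
    have hlc : q.leadingCoeff = q.coeff 1 := by rw [leadingCoeff, he]
    set z := exp (2 * π * I * q.coeff 1)
    have hterm (n : ℕ) :
        exp (2 * π * I * q.eval (n : ℝ)) = exp (2 * π * I * q.coeff 0) * z ^ n := by
      have heval : q.eval (n : ℝ) = q.coeff 0 + q.coeff 1 * n := by
        conv_lhs => rw [eq_X_add_C_of_natDegree_le_one he.le]
        simp [add_comm]
      rw [heval, ← exp_nat_mul, ← exp_add]
      push_cast
      ring_nf
    have hz1 : z ≠ 1 := exp_two_pi_I_mul_ne_one (hlc ▸ hirr)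
    simpa [hterm, ← mul_sum, mul_left_comm] using
      (tendsto_average_pow (norm_exp_two_pi_I_mul _) hz1).const_mul (exp (2 * π * I * q.coeff 0))
  | succ e ih =>
    refine tendsto_average_of_tendsto_average_inner (𝕜 := ℂ)
      (fun n => (norm_exp_two_pi_I_mul _).le) fun d hd => ?_
    have hcor (n : ℕ) :
        ⟪exp (2 * π * I * q.eval ((n + d : ℕ) : ℝ)), exp (2 * π * I * q.eval (n : ℝ))⟫_ℂ
          = exp (2 * π * I * (q - taylor (d : ℝ) q).eval (n : ℝ)) := by
      rw [RCLike.inner_apply', conj_exp_two_pi_I_mul_mul, eval_sub, taylor_eval]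
      push_cast
      rfl
    simp only [hcor]
    exact ih (irrational_leadingCoeff_sub_taylor he hirr hd)
      (natDegree_sub_taylor (by positivity) he)

section L2

variable {X : Type*} [MeasurableSpace X] {μ : Measure X} {𝕜 : Type*} [RCLike 𝕜] {C : ℝ}

theorem tendsto_eLpNorm_average_of_tendsto_average_integral_inner [IsFiniteMeasure μ]
    {E : Type*} [NormedAddCommGroup E] [InnerProductSpace 𝕜 E] [NormedSpace ℝ E]
    {a : ℕ → X → E} (ha : ∀ n, AEStronglyMeasurable (a n) μ) (hC : ∀ n x, ‖a n x‖ ≤ C)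
    (hcor : ∀ d, 0 < d → Tendsto (fun N : ℕ =>
      (N : ℝ)⁻¹ • ∑ n ∈ range N, ∫ x, ⟪a (n + d) x, a n x⟫_𝕜 ∂μ) atTop (𝓝 0)) :
    Tendsto (fun N : ℕ => (eLpNorm (fun x => (N : ℝ)⁻¹ • ∑ n ∈ range N, a n x) 2 μ).toReal)
      atTop (𝓝 0) := by
  have hmem (n : ℕ) : MemLp (a n) 2 μ := .of_bound (ha n) C (ae_of_all _ (hC n))
  set U : ℕ → Lp E 2 μ := fun n => (hmem n).toLp
  have hU (n : ℕ) : ‖U n‖ ≤ measureUnivNNReal μ ^ (2 : ENNReal).toReal⁻¹ * |C| :=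
    Lp.norm_le_of_ae_bound (abs_nonneg C) <| by
      filter_upwards [(hmem n).coeFn_toLp] with x hx
      exact hx ▸ (hC n x).trans (le_abs_self C)
  have hinner (m n : ℕ) : ⟪U m, U n⟫_𝕜 = ∫ x, ⟪a m x, a n x⟫_𝕜 ∂μ := by
    refine integral_congr_ae ?_
    filter_upwards [(hmem m).coeFn_toLp, (hmem n).coeFn_toLp] with x hm hn
    rw [hm, hn]
  have hnorm (N : ℕ) : (eLpNorm (fun x => (N : ℝ)⁻¹ • ∑ n ∈ range N, a n x) 2 μ).toReal
      = ‖(N : ℝ)⁻¹ • ∑ n ∈ range N, U n‖ := by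
    rw [Lp.norm_def]
    congr 1
    refine eLpNorm_congr_ae ?_
    filter_upwards [Lp.coeFn_smul ((N : ℝ)⁻¹) (∑ n ∈ range N, U n),
      Lp.coeFn_fun_finsetSum (range N) U,
      (ae_all_iff.2 fun n => (hmem n).coeFn_toLp : ∀ᵐ x ∂μ, ∀ n, U n x = a n x)]
      with x hsmul hsum hUa
    simp only [hsmul, Pi.smul_apply, hsum, hUa]
  have hcorU (d : ℕ) (hd : 0 < d) :
      Tendsto (fun N : ℕ => (N : ℝ)⁻¹ • ∑ n ∈ range N, ⟪U (n + d), U n⟫_𝕜) atTop (𝓝 0) := by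
    simpa only [hinner] using hcor d hd
  simp only [hnorm]
  exact tendsto_zero_iff_norm_tendsto_zero.1 (tendsto_average_of_tendsto_average_inner hU hcorU)

theorem norm_integral_mul_le_mul_eLpNorm [IsProbabilityMeasure μ] {G F : X → 𝕜}
    (hG : ∀ x, ‖G x‖ ≤ C) (hF : MemLp F 2 μ) :
    ‖∫ x, G x * F x ∂μ‖ ≤ C * (eLpNorm F 2 μ).toReal := by
  have hC : 0 ≤ C := by
    obtain ⟨x⟩ := nonempty_of_isProbabilityMeasure μ
    exact (norm_nonneg _).trans (hG x)
  have hF1 : Integrable F μ := hF.integrable one_le_two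
  calc ‖∫ x, G x * F x ∂μ‖ ≤ ∫ x, C * ‖F x‖ ∂μ :=
        norm_integral_le_of_norm_le (hF1.norm.const_mul C) (ae_of_all _ fun x => by
          rw [norm_mul]; gcongr; exact hG x)
    _ = C * (eLpNorm F 1 μ).toReal := by
        rw [integral_const_mul, integral_norm_eq_lintegral_enorm hF1.1,
          eLpNorm_one_eq_lintegral_enorm]
    _ ≤ C * (eLpNorm F 2 μ).toReal := by
        gcongr
        · exact hF.eLpNorm_ne_top
        · exact eLpNorm_le_eLpNorm_of_exponent_le one_le_two hF.1

end L2

section TwistedProduct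

variable {X : Type*} {m : ℕ}

noncomputable def twistedProduct (S : Fin m → X → X) (f : Fin m → X → ℂ) (q : ℝ[X]) (n : ℕ)
    (x : X) : ℂ :=
  (∏ i, f i ((S i)^[n] x)) * Complex.exp (2 * π * Complex.I * q.eval (n : ℝ))

noncomputable def lagProduct (S : Fin m → X → X) (f : Fin m → X → ℂ) (d : ℕ) (i : Fin m)
    (x : X) : ℂ :=
  conj (f i ((S i)^[d] x)) * f i x

variable (S : Fin m → X → X) (f : Fin m → X → ℂ) (q : ℝ[X])

theorem twistedProduct_succ (n : ℕ) (x : X) :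
    twistedProduct S f q (n + 1) x = twistedProduct S (fun i => f i ∘ S i) (taylor 1 q) n x := by
  simp only [twistedProduct, Function.comp_apply, ← Function.iterate_succ_apply', taylor_eval]
  push_cast
  rfl

theorem conj_twistedProduct_add_mul (n d : ℕ) (x : X) :
    conj (twistedProduct S f q (n + d) x) * twistedProduct S f q n x
      = twistedProduct S (lagProduct S f d) (q - taylor (d : ℝ) q) n x := by
  simp only [twistedProduct, lagProduct, map_mul, map_prod, Nat.add_comm n d,
    Function.iterate_add_apply]
  rw [mul_mul_mul_comm, ← prod_mul_distrib, Complex.conj_exp_two_pi_I_mul_mul, eval_sub,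
    taylor_eval]
  push_cast
  ring_nf

variable {S f}

theorem norm_twistedProduct_le {C : Fin m → ℝ} (hC : ∀ i x, ‖f i x‖ ≤ C i) (n : ℕ) (x : X) :
    ‖twistedProduct S f q n x‖ ≤ ∏ i, C i := by
  rw [twistedProduct, norm_mul, Complex.norm_exp_two_pi_I_mul, mul_one, norm_prod]
  exact prod_le_prod (fun i _ => norm_nonneg _) fun i _ => hC i _

theorem norm_lagProduct_le {C : Fin m → ℝ} (hC : ∀ i x, ‖f i x‖ ≤ C i) (d : ℕ) (i : Fin m)
    (x : X) : ‖lagProduct S f d i x‖ ≤ C i * C i := by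
  rw [lagProduct, norm_mul, RCLike.norm_conj]
  exact mul_le_mul (hC i _) (hC i _) (norm_nonneg _) ((norm_nonneg _).trans (hC i x))

variable [MeasurableSpace X]

theorem measurable_twistedProduct (hS : ∀ i, Measurable (S i)) (hf : ∀ i, Measurable (f i))
    (n : ℕ) : Measurable (twistedProduct S f q n) :=
  (Finset.measurable_prod _ fun i _ => (hf i).comp ((hS i).iterate n)).mul_const _

theorem measurable_lagProduct (hS : ∀ i, Measurable (S i)) (hf : ∀ i, Measurable (f i)) (d : ℕ)
    (i : Fin m) : Measurable (lagProduct S f d i) :=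
  (Complex.continuous_conj.measurable.comp ((hf i).comp ((hS i).iterate d))).mul (hf i)

theorem memLp_twistedProduct {μ : Measure X} [IsFiniteMeasure μ] (hS : ∀ i, Measurable (S i))
    (hf : ∀ i, Measurable (f i)) {C : Fin m → ℝ} (hC : ∀ i x, ‖f i x‖ ≤ C i) (p : ENNReal)
    (n : ℕ) : MemLp (twistedProduct S f q n) p μ :=
  .of_bound (measurable_twistedProduct q hS hf n).aestronglyMeasurable _
    (ae_of_all _ (norm_twistedProduct_le q hC n))

end TwistedProduct

section CompSymmLast

variable {X : Type*} [MeasurableSpace X] {μ : Measure X} {m : ℕ}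

theorem MeasureTheory.MeasurePreserving.integral_comp_iterate {e : X ≃ᵐ X}
    (he : MeasurePreserving e μ μ) {E : Type*} [NormedAddCommGroup E] [NormedSpace ℝ E]
    (F : X → E) (n : ℕ) : ∫ x, F (e^[n] x) ∂μ = ∫ x, F x ∂μ := by
  induction n with
  | zero => rfl
  | succ n ih => exact (he.integral_comp' fun y => F (e^[n] y)).trans ih

def compSymmLast (S : Fin (m + 1) → X ≃ᵐ X) (j : Fin m) : X ≃ᵐ X :=
  (S (Fin.last m)).symm.trans (S j.castSucc)

variable {S : Fin (m + 1) → X ≃ᵐ X}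

theorem measurePreserving_compSymmLast (hS : ∀ i, MeasurePreserving (S i) μ μ) (j : Fin m) :
    MeasurePreserving (compSymmLast S j) μ μ :=
  (hS _).comp ((hS _).symm _)

theorem commute_symm_last (hcomm : ∀ i j, Function.Commute (S i) (S j)) (i : Fin (m + 1)) :
    Function.Commute (S i) (S (Fin.last m)).symm :=
  (hcomm i (Fin.last m)).inverses_right (S (Fin.last m)).apply_symm_apply
    (S (Fin.last m)).symm_apply_apply

theorem commute_compSymmLast (hcomm : ∀ i j, Function.Commute (S i) (S j)) (j k : Fin m) :
    Function.Commute (compSymmLast S j) (compSymmLast S k) := by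
  have hσ := commute_symm_last hcomm
  exact ((hcomm _ _).comp_left (hσ _).symm).comp_right ((hσ _).comp_left (.refl _))

theorem iterate_castSucc_eq_iterate_compSymmLast_comp
    (hcomm : ∀ i j, Function.Commute (S i) (S j)) (j : Fin m) (n : ℕ) :
    (S j.castSucc)^[n] = (compSymmLast S j)^[n] ∘ (S (Fin.last m))^[n] := by
  have hcomp : ⇑(compSymmLast S j) ∘ S (Fin.last m) = S j.castSucc := by
    ext x; simp [compSymmLast]
  have hc : Function.Commute (compSymmLast S j) (S (Fin.last m)) := fun x => by
    simp [compSymmLast, (hcomm _ _).eq]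
  rw [← hc.comp_iterate, hcomp]

theorem integral_twistedProduct_eq_integral_mul_compSymmLast
    (hS : ∀ i, MeasurePreserving (S i) μ μ) (hcomm : ∀ i j, Function.Commute (S i) (S j))
    (g : Fin (m + 1) → X → ℂ) (r : ℝ[X]) (n : ℕ) :
    ∫ x, twistedProduct (fun i => S i) g r n x ∂μ
      = ∫ x, g (Fin.last m) x
          * twistedProduct (fun j => compSymmLast S j) (fun j => g j.castSucc) r n x ∂μ := by
  conv_rhs => rw [← (hS (Fin.last m)).integral_comp_iterate _ n]
  congr 1 with x
  simp only [twistedProduct, Fin.prod_univ_castSucc,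
    iterate_castSucc_eq_iterate_compSymmLast_comp hcomm, Function.comp_apply]
  ring

theorem average_integral_inner_twistedProduct_eq [IsFiniteMeasure μ]
    (hS : ∀ i, MeasurePreserving (S i) μ μ) (hcomm : ∀ i j, Function.Commute (S i) (S j))
    {f : Fin (m + 1) → X → ℂ} (hf : ∀ i, Measurable (f i)) {C : Fin (m + 1) → ℝ}
    (hC : ∀ i x, ‖f i x‖ ≤ C i) (q : ℝ[X]) (d N : ℕ) :
    (N : ℝ)⁻¹ • ∑ n ∈ range N, ∫ x, ⟪twistedProduct (fun i => S i) f q (n + d) x,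
        twistedProduct (fun i => S i) f q n x⟫_ℂ ∂μ
      = ∫ x, lagProduct (fun i => S i) f d (Fin.last m) x * ((N : ℝ)⁻¹ • ∑ n ∈ range N,
          twistedProduct (fun j => compSymmLast S j)
            (fun j => lagProduct (fun i => S i) f d j.castSucc) (q - taylor (d : ℝ) q) n x) ∂μ := by
  have hSmeas (i : Fin (m + 1)) : Measurable (S i) := (S i).measurable
  have hint (n : ℕ) : Integrable (fun x => lagProduct (fun i => S i) f d (Fin.last m) x
      * twistedProduct (fun j => compSymmLast S j)
          (fun j => lagProduct (fun i => S i) f d j.castSucc) (q - taylor (d : ℝ) q) n x) μ :=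
    (memLp_twistedProduct _ (fun j => (compSymmLast S j).measurable)
      (fun j => measurable_lagProduct hSmeas hf d _) (fun j => norm_lagProduct_le hC d _) 1 n
      |>.integrable le_rfl).bdd_mul
      (measurable_lagProduct hSmeas hf d _).aestronglyMeasurable
      (ae_of_all _ (norm_lagProduct_le hC d _))
  simp only [RCLike.inner_apply', conj_twistedProduct_add_mul,
    integral_twistedProduct_eq_integral_mul_compSymmLast hS hcomm]
  rw [← integral_finsetSum _ fun n _ => hint n, ← integral_smul]
  simp only [mul_sum, mul_smul_comm]

end CompSymmLast

theorem tendsto_eLpNorm_average_twistedProduct {X : Type*} [MeasurableSpace X] {μ : Measure X}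
    [IsProbabilityMeasure μ] {m : ℕ} {S : Fin m → X ≃ᵐ X} (hS : ∀ i, MeasurePreserving (S i) μ μ)
    (hcomm : ∀ i j, Function.Commute (S i) (S j)) {q : ℝ[X]} (hdeg : m < q.natDegree)
    (hirr : Irrational q.leadingCoeff) {f : Fin m → X → ℂ} (hf : ∀ i, Measurable (f i))
    (hbdd : ∀ i, ∃ C, ∀ x, ‖f i x‖ ≤ C) :
    Tendsto (fun N : ℕ => (eLpNorm (fun x =>
        (N : ℝ)⁻¹ • ∑ n ∈ range N, twistedProduct (fun i => S i) f q n x) 2 μ).toReal)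
      atTop (𝓝 0) := by
  induction m generalizing q with
  | zero =>
    have hconst (N : ℕ) : (eLpNorm (fun x =>
        (N : ℝ)⁻¹ • ∑ n ∈ range N, twistedProduct (fun i => S i) f q n x) 2 μ).toReal
        = ‖(N : ℝ)⁻¹ • ∑ n ∈ range N, Complex.exp (2 * π * Complex.I * q.eval (n : ℝ))‖ := by
      simp only [twistedProduct, univ_eq_empty, prod_empty, one_mul]
      rw [eLpNorm_const _ two_ne_zero (IsProbabilityMeasure.ne_zero μ)]
      simp
    simp only [hconst]
    exact tendsto_zero_iff_norm_tendsto_zero.1 (tendsto_average_exp_two_pi_I_mul_eval hdeg hirr)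
  | succ m ih =>
    choose C hC using hbdd
    have hSmeas (i : Fin (m + 1)) : Measurable (S i) := (S i).measurable
    refine tendsto_eLpNorm_average_of_tendsto_average_integral_inner (𝕜 := ℂ)
      (fun n => (measurable_twistedProduct q hSmeas hf n).aestronglyMeasurable)
      (norm_twistedProduct_le q hC) fun d hd => ?_
    obtain ⟨e, he⟩ : ∃ e, q.natDegree = e + 1 := ⟨q.natDegree - 1, by omega⟩
    have hlag := norm_lagProduct_le (S := fun i => S i) hC d
    have hsmaller := ih (measurePreserving_compSymmLast hS) (commute_compSymmLast hcomm)
      (by rw [natDegree_sub_taylor (by positivity) he]; omega)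
      (irrational_leadingCoeff_sub_taylor he hirr hd)
      (fun j => measurable_lagProduct hSmeas hf d _) (fun j => ⟨_, hlag j.castSucc⟩)
    refine squeeze_zero_norm (fun N => ?_)
      (by simpa only [mul_zero] using hsmaller.const_mul (C (Fin.last m) * C (Fin.last m)))
    rw [average_integral_inner_twistedProduct_eq hS hcomm hf hC]
    exact norm_integral_mul_le_mul_eLpNorm (hlag _) <|
      (memLp_finsetSum (range N) fun n _ => memLp_twistedProduct (q - taylor (d : ℝ) q)
        (fun j => (compSymmLast S j).measurable) (fun j => measurable_lagProduct hSmeas hf d _)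
        (fun j => hlag j.castSucc) 2 n).const_smul (N : ℝ)⁻¹

/-- Norm-convergence consequence of Proposition `PropCopiedFromFLW`: for commuting
invertible measure preserving `S₁, …, S_{k−1}`, bounded functions `f₁, …, f_{k−1}`, and a
real polynomial `p` of degree at least `k` with irrational leading coefficient, the `L²`
norms of the averages of `S₁ⁿf₁ ⋯ S_{k−1}ⁿf_{k−1} e^{2πip(n)}` tend to `0`. -/
theorem twisted_product_averages_tendsto_zero {X : Type*} [MeasurableSpace X]
    (μ : Measure X) [IsProbabilityMeasure μ] (k : ℕ) (hk : 2 ≤ k)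
    (S : Fin (k - 1) → X ≃ᵐ X) (hS : ∀ i, MeasurePreserving (S i) μ μ)
    (hcomm : ∀ i j, ⇑(S i) ∘ ⇑(S j) = ⇑(S j) ∘ ⇑(S i))
    (p : Polynomial ℝ) (hdeg : k ≤ p.natDegree) (hirr : Irrational p.leadingCoeff)
    (f : Fin (k - 1) → X → ℂ) (hmeas : ∀ i, Measurable (f i))
    (hbdd : ∀ i, ∃ C : ℝ, ∀ x, ‖f i x‖ ≤ C) :
    Tendsto (fun N : ℕ =>
        (eLpNorm (fun x =>
            (N : ℝ)⁻¹ • ∑ n ∈ Finset.range N,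
              (∏ i, f i ((⇑(S i))^[n + 1] x)) *
                Complex.exp (2 * Real.pi * Complex.I * p.eval ((n + 1 : ℕ) : ℝ))) 2 μ).toReal)
      atTop (nhds 0) := by
  have hlim := tendsto_eLpNorm_average_twistedProduct hS (fun i j => congrFun (hcomm i j))
    (q := taylor 1 p) (by rw [natDegree_taylor]; omega) (by rwa [leadingCoeff_taylor])
    (f := fun i => f i ∘ S i) (fun i => (hmeas i).comp (S i).measurable)
    (fun i => (hbdd i).imp fun C hC x => hC _)
  simp only [← twistedProduct_succ] at hlim
  exact hlim
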